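/- arXiv:2409.16459 — 2 statements merged into one kernel-verified Lean document; each statement's English description precedes it below -/
import Mathlib

section
/- Let n, p, g, r be positive integers with q = n - p > 1, gcd(n,p) = 1, gcd(p, r-g) = 1, N = qr - ng > 0, and gcd(n,N) = gcd(n,r) = 1. Then the system of equations f = ∂f/∂Y = ∂²f/∂Y² = 0, where f(X,Y) = Y^n - X^g Y^p + X^r, has no solution (X,Y) ∈ ℂ² with X ≠ 0. -/
/-- The system `f = ∂f/∂Y = ∂²f/∂Y² = 0`, where `f(X,Y) = Y^n - X^g Y^p + X^r`,
has no solution with `X ≠ 0`: every critical point away from `X = 0` is a simple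
double point. -/
theorem no_triple_root (n p q g r N : ℕ)
    (hq : q = n - p) (hq1 : 1 < q) (hnp : Nat.Coprime n p)
    (hpg : Nat.Coprime p (r - g)) (hgr : g < r)
    (hN : (N : ℤ) = (q : ℤ) * r - (n : ℤ) * g) (hNpos : 0 < N)
    (hnN : Nat.Coprime n N) (hnr : Nat.Coprime n r)
    (f : ℂ → ℂ → ℂ) (hf : ∀ X Y, f X Y = Y ^ n - X ^ g * Y ^ p + X ^ r) :
    ¬ ∃ (X Y : ℂ), X ≠ 0 ∧ f X Y = 0 ∧ deriv (f X) Y = 0 ∧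
      deriv (deriv (f X)) Y = 0 := by
  rintro ⟨X, Y, hX, h0, h1, h2⟩
  have hp : 0 < p := by
    rcases Nat.eq_zero_or_pos p with hp0 | hp
    · subst hp0
      simp [Nat.coprime_zero_right] at hnp
      omega
    · exact hp
  have hn : p + 2 ≤ n := by omega
  have hfun : f X = fun Y : ℂ => Y ^ n - X ^ g * Y ^ p + X ^ r := funext (hf X)
  -- Y ≠ 0
  have hY0 : Y ≠ 0 := by
    intro hY
    rw [hf, hY, zero_pow (by omega : n ≠ 0), zero_pow (by omega : p ≠ 0)] at h0
    simp at h0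
    exact hX h0.1
  -- first derivative
  have hd : deriv (f X) = fun y : ℂ => (n : ℂ) * y ^ (n - 1) - X ^ g * ((p : ℂ) * y ^ (p - 1)) := by
    funext y
    rw [hfun]
    rw [deriv_add_const]
    rw [deriv_fun_sub (differentiableAt_pow n) ((differentiableAt_pow p).const_mul _)]
    rw [deriv_pow_field, deriv_const_mul _ (differentiableAt_pow p), deriv_pow_field]
  have h1' : (n : ℂ) * Y ^ (n - 1) - X ^ g * ((p : ℂ) * Y ^ (p - 1)) = 0 := by
    rw [hd] at h1; exact h1
  -- second derivative
  have h2' : (n : ℂ) * ((n - 1 : ℕ) * Y ^ (n - 1 - 1)) -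
      X ^ g * ((p : ℂ) * ((p - 1 : ℕ) * Y ^ (p - 1 - 1))) = 0 := by
    rw [hd] at h2
    rw [deriv_fun_sub ((differentiableAt_pow (n-1)).const_mul _)
        (((differentiableAt_pow (p-1)).const_mul _).const_mul _),
      deriv_const_mul _ (differentiableAt_pow (n-1)),
      deriv_const_mul _ ((differentiableAt_pow (p-1)).const_mul _),
      deriv_const_mul _ (differentiableAt_pow (p-1)), deriv_pow_field, deriv_pow_field] at h2
    linear_combination h2
  have hYn : Y ^ (n - 1) ≠ 0 := pow_ne_zero _ hY0
  have hn0 : (n : ℂ) ≠ 0 := Nat.cast_ne_zero.mpr (by omega)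
  by_cases hp1 : p = 1
  · subst hp1
    simp only [Nat.sub_self, Nat.cast_zero, zero_mul, mul_zero, sub_zero] at h2'
    have hn1 : ((n - 1 : ℕ) : ℂ) ≠ 0 := Nat.cast_ne_zero.mpr (by omega)
    have hYn2 : Y ^ (n - 1 - 1) ≠ 0 := pow_ne_zero _ hY0
    exact (mul_ne_zero hn0 (mul_ne_zero hn1 hYn2)) h2'
  · have hp2 : 2 ≤ p := by omega
    have eY1 : Y ^ (n - 1 - 1) * Y = Y ^ (n - 1) := by
      rw [← pow_succ]; congr 1; omega
    have eY2 : Y ^ (p - 1 - 1) * Y = Y ^ (p - 1) := by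
      rw [← pow_succ]; congr 1; omega
    -- multiply h2' by Y
    have h3 : (n : ℂ) * ((n - 1 : ℕ) * Y ^ (n - 1)) =
        X ^ g * ((p : ℂ) * ((p - 1 : ℕ) * Y ^ (p - 1))) := by
      rw [← eY1, ← eY2]; linear_combination Y * h2'
    have h4 : (((n - 1 : ℕ) : ℂ) - ((p - 1 : ℕ) : ℂ)) * ((n : ℂ) * Y ^ (n - 1)) = 0 := by
      linear_combination h3 - ((p - 1 : ℕ) : ℂ) * h1'
    rcases mul_eq_zero.mp h4 with h5 | h5
    · have : ((n - 1 : ℕ) : ℂ) = ((p - 1 : ℕ) : ℂ) := by linear_combination h5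
      have : (n - 1 : ℕ) = (p - 1 : ℕ) := Nat.cast_inj.mp this
      omega
    · exact (mul_ne_zero hn0 hYn) h5
end

section
/- Let f(X,Y) = Y^n - X^g Y^p + X^r with q = n-p > 1, gcd(n,p)=1, N = qr - ng > 0, R = p^p q^q / n^n. Then the discriminant of f with respect to Y, as a polynomial in X, vanishes at X = ω_ℓ = R^{1/N} e(ℓ/N) for each ℓ ∈ [0, N-1], i.e., the critical values of the projection (X,Y) ↦ X away from X ∈ {0, ∞} are exactly the N-th roots of R times roots of unity. -/
open Complex Real

lemma aux_exists_root (p q : ℕ) (h : Nat.Coprime p q) (A B : ℂ) (hA : A ≠ 0) (hB : B ≠ 0)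
    (hAB : A ^ p = B ^ q) : ∃ Y : ℂ, Y ^ q = A ∧ Y ^ p = B := by
  obtain ⟨s, t, hst⟩ : ∃ s t : ℤ, (p : ℤ) * s + (q : ℤ) * t = 1 := by
    refine ⟨Nat.gcdA p q, Nat.gcdB p q, ?_⟩
    have := Nat.gcd_eq_gcd_ab p q
    rw [h] at this
    exact_mod_cast this.symm
  have hBq : B ^ (q : ℤ) = A ^ (p : ℤ) := by
    rw [zpow_natCast, zpow_natCast, hAB]
  have hAq : A ^ (p : ℤ) = B ^ (q : ℤ) := hBq.symm
  refine ⟨A ^ t * B ^ s, ?_, ?_⟩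
  · have key : (A ^ t * B ^ s) ^ (q : ℤ) = A := by
      calc (A ^ t * B ^ s) ^ (q : ℤ)
          = A ^ (t * q) * B ^ (q * s) := by
            rw [mul_zpow, ← zpow_mul, ← zpow_mul, mul_comm s (q : ℤ)]
        _ = A ^ (t * q) * A ^ (p * s) := by rw [zpow_mul B (q:ℤ) s, hBq, ← zpow_mul]
        _ = A ^ (t * q + p * s) := (zpow_add₀ hA _ _).symm
        _ = A := by rw [show t * q + p * s = 1 by linarith, zpow_one]
    rw [← zpow_natCast (A ^ t * B ^ s) q]; exact key
  · have key : (A ^ t * B ^ s) ^ (p : ℤ) = B := by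
      calc (A ^ t * B ^ s) ^ (p : ℤ)
          = A ^ (p * t) * B ^ (s * p) := by
            rw [mul_zpow, ← zpow_mul, ← zpow_mul, mul_comm t (p : ℤ)]
        _ = B ^ (q * t) * B ^ (s * p) := by rw [zpow_mul A (p:ℤ) t, hAq, ← zpow_mul]
        _ = B ^ (q * t + s * p) := (zpow_add₀ hB _ _).symm
        _ = B := by rw [show q * t + s * p = 1 by linarith, zpow_one]
    rw [← zpow_natCast (A ^ t * B ^ s) p]; exact key

/-- The critical values of the projection `(X,Y) ↦ X` for the trinomial
`f(X,Y) = Y^n - X^g Y^p + X^r` away from `X ∈ {0,∞}` are exactly the points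
`ω_ℓ = R^{1/N} e(ℓ/N)`, `ℓ ∈ [0, N-1]`, i.e. `X ≠ 0` is a critical value iff
`X^N = R` where `R = p^p q^q / n^n`. -/
theorem critical_values_trinomial (n p q g r N : ℕ)
    (hq : q = n - p) (hq1 : 1 < q) (hnp : Nat.Coprime n p)
    (hN : (N : ℤ) = (q : ℤ) * r - (n : ℤ) * g) (hNpos : 0 < N)
    (R : ℝ) (hR : R = (p : ℝ) ^ p * (q : ℝ) ^ q / (n : ℝ) ^ n)
    (f : ℂ → ℂ → ℂ) (hf : ∀ X Y, f X Y = Y ^ n - X ^ g * Y ^ p + X ^ r)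
    (ω : ℕ → ℂ)
    (hω : ∀ ℓ, ω ℓ = (R ^ ((1 : ℝ) / N) : ℝ) * Complex.exp (2 * π * I * (ℓ / N))) :
    (∀ ℓ < N, ∃ Y : ℂ, f (ω ℓ) Y = 0 ∧ deriv (f (ω ℓ)) Y = 0) ∧
    (∀ X : ℂ, X ≠ 0 →
      ((∃ Y : ℂ, f X Y = 0 ∧ deriv (f X) Y = 0) ↔ X ^ N = (R : ℂ))) := by
  -- basic numerics
  have hp0 : p ≠ 0 := by
    rintro rfl
    rw [Nat.coprime_zero_right] at hnp
    omega
  have hpn : p < n := by omega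
  have hn : n = p + q := by omega
  have hn0 : n ≠ 0 := by omega
  have hq0 : q ≠ 0 := by omega
  have hqr : q * r = N + n * g := by
    have : (q : ℤ) * r = N + n * g := by linarith
    exact_mod_cast this
  have hgr : g < r := by
    by_contra hc
    push_neg at hc
    have h1 : q * r ≤ q * g := Nat.mul_le_mul_left q hc
    have h2 : q * g ≤ n * g := Nat.mul_le_mul_right g (by omega)
    omega
  have hr0 : r ≠ 0 := by omega
  -- casts
  have hnC : (n : ℂ) ≠ 0 := Nat.cast_ne_zero.mpr hn0
  have hpC : (p : ℂ) ≠ 0 := Nat.cast_ne_zero.mpr hp0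
  have hqC : (q : ℂ) ≠ 0 := Nat.cast_ne_zero.mpr hq0
  have hqc : (q : ℂ) = (n : ℂ) - (p : ℂ) := by
    rw [hn]; push_cast; ring
  have hnC' : (n : ℂ) = (p : ℂ) + (q : ℂ) := by
    rw [hn]; push_cast; ring
  have hpqC : (p : ℂ) + (q : ℂ) ≠ 0 := hnC' ▸ hnC
  have hRC : (R : ℂ) = (p : ℂ) ^ p * (q : ℂ) ^ q / (n : ℂ) ^ n := by
    rw [hR]; push_cast; ring
  have hnn : (n : ℂ) ^ n = (n : ℂ) ^ p * (n : ℂ) ^ q := by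
    rw [← pow_add]; congr 1
  -- derivative formula
  have hderiv : ∀ X Y : ℂ,
      deriv (f X) Y = (n : ℂ) * Y ^ (n - 1) - X ^ g * ((p : ℂ) * Y ^ (p - 1)) := by
    intro X Y
    have hfx : f X = fun Y => Y ^ n - X ^ g * Y ^ p + X ^ r := funext (hf X)
    rw [hfx]
    have h1 : HasDerivAt (fun Y : ℂ => Y ^ n - X ^ g * Y ^ p + X ^ r)
        ((n : ℂ) * Y ^ (n - 1) - X ^ g * ((p : ℂ) * Y ^ (p - 1))) Y := by
      simpa using
        (((hasDerivAt_pow n Y).sub ((hasDerivAt_pow p Y).const_mul (X ^ g))).add_const (X ^ r))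
    exact h1.deriv
  have key : ∀ X : ℂ, X ≠ 0 →
      ((∃ Y : ℂ, f X Y = 0 ∧ deriv (f X) Y = 0) ↔ X ^ N = (R : ℂ)) := by
    intro X hX
    constructor
    · rintro ⟨Y, hfY, hdY⟩
      rw [hf] at hfY
      rw [hderiv] at hdY
      have hY0 : Y ≠ 0 := by
        rintro rfl
        rw [zero_pow hn0, zero_pow hp0] at hfY
        simp only [mul_zero, sub_zero, zero_sub, zero_add] at hfY
        exact pow_ne_zero r hX hfY
      have en1 : Y ^ (n - 1) = Y ^ (p - 1) * Y ^ q := by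
        rw [← pow_add]; congr 1; omega
      rw [en1] at hdY
      have h2 : Y ^ (p - 1) * ((n : ℂ) * Y ^ q - (p : ℂ) * X ^ g) = 0 := by
        linear_combination hdY
      have key1 : (n : ℂ) * Y ^ q = (p : ℂ) * X ^ g := by
        rcases mul_eq_zero.mp h2 with h | h
        · exact absurd h (pow_ne_zero _ hY0)
        · linear_combination h
      have eYn : Y ^ n = Y ^ p * Y ^ q := by
        rw [hn, pow_add]
      rw [eYn] at hfY
      have key2 : (q : ℂ) * (X ^ g * Y ^ p) = (n : ℂ) * X ^ r := by
        linear_combination (-(n : ℂ)) * hfY + Y ^ p * key1 + (X ^ g * Y ^ p) * hqc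
      -- raise to powers
      have E1 : (n : ℂ) ^ p * Y ^ (p * q) = (p : ℂ) ^ p * X ^ (g * p) := by
        have := congrArg (· ^ p) key1
        simpa [mul_pow, ← pow_mul, mul_comm q p] using this
      have E2 : (q : ℂ) ^ q * (X ^ (g * q) * Y ^ (p * q)) = (n : ℂ) ^ q * X ^ (r * q) := by
        have := congrArg (· ^ q) key2
        simpa [mul_pow, ← pow_mul] using this
      have hrq : r * q = N + (g * p + g * q) := by
        rw [Nat.mul_comm r q, hqr, hn]; ring
      have hXrq : X ^ (r * q) = X ^ N * (X ^ (g * p) * X ^ (g * q)) := by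
        rw [hrq, pow_add, pow_add]
      have E3 : (p : ℂ) ^ p * (q : ℂ) ^ q * (X ^ (g * p) * X ^ (g * q))
          = ((n : ℂ) ^ p * (n : ℂ) ^ q) * (X ^ N * (X ^ (g * p) * X ^ (g * q))) := by
        calc (p:ℂ)^p * (q:ℂ)^q * (X ^ (g*p) * X ^ (g*q))
            = (q:ℂ)^q * X^(g*q) * ((p:ℂ)^p * X^(g*p)) := by ring
          _ = (q:ℂ)^q * X^(g*q) * ((n:ℂ)^p * Y^(p*q)) := by rw [← E1]
          _ = (n:ℂ)^p * ((q:ℂ)^q * (X^(g*q) * Y^(p*q))) := by ring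
          _ = (n:ℂ)^p * ((n:ℂ)^q * X^(r*q)) := by rw [E2]
          _ = ((n:ℂ)^p * (n:ℂ)^q) * (X ^ N * (X ^ (g*p) * X^(g*q))) := by rw [hXrq]; ring
      have E4 : (p : ℂ) ^ p * (q : ℂ) ^ q = (n : ℂ) ^ n * X ^ N := by
        rw [hnn]
        have hc : (X ^ (g*p) * X ^ (g*q)) ≠ 0 :=
          mul_ne_zero (pow_ne_zero _ hX) (pow_ne_zero _ hX)
        have := mul_right_cancel₀ hc
          (by linear_combination E3 :
            ((p : ℂ) ^ p * (q : ℂ) ^ q) * (X ^ (g*p) * X ^ (g*q))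
              = (((n : ℂ) ^ p * (n : ℂ) ^ q) * X ^ N) * (X ^ (g*p) * X ^ (g*q)))
        linear_combination this
      rw [hRC]
      field_simp
      linear_combination E4.symm
    · intro hXN
      set A : ℂ := (p : ℂ) / n * X ^ g with hA_def
      set B : ℂ := (n : ℂ) / q * X ^ (r - g) with hB_def
      have hA0 : A ≠ 0 :=
        mul_ne_zero (div_ne_zero hpC hnC) (pow_ne_zero _ hX)
      have hB0 : B ≠ 0 :=
        mul_ne_zero (div_ne_zero hnC hqC) (pow_ne_zero _ hX)
      have hrgq : (r - g) * q = N + g * p := by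
        have h1 : (r - g) * q = r * q - g * q := Nat.sub_mul r g q
        have h2 : r * q = N + g * p + g * q := by
          rw [Nat.mul_comm r q, hqr, hn]; ring
        rw [h1, h2, Nat.add_sub_cancel]
      have hAB : A ^ p = B ^ q := by
        have h1 : A ^ p = (p : ℂ) ^ p / (n : ℂ) ^ p * X ^ (g * p) := by
          rw [hA_def, mul_pow, div_pow, ← pow_mul, mul_comm g p]
        have h2 : B ^ q = (n : ℂ) ^ q / (q : ℂ) ^ q * (X ^ N * X ^ (g * p)) := by
          rw [hB_def, mul_pow, div_pow, ← pow_mul, hrgq, pow_add]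
        rw [h1, h2, hXN, hRC, hnn]
        field_simp
      have hpq : Nat.Coprime p q := by
        have h' : Nat.Coprime (q + p) p := by rwa [hn, Nat.add_comm] at hnp
        exact (Nat.coprime_add_self_left.mp h').symm
      obtain ⟨Y, hYq, hYp⟩ := aux_exists_root p q hpq A B hA0 hB0 hAB
      have hXr : X ^ r = X ^ (r - g) * X ^ g := by
        rw [← pow_add]; congr 1; omega
      refine ⟨Y, ?_, ?_⟩
      · rw [hf, show Y ^ n = Y ^ p * Y ^ q from by rw [hn, pow_add],
          hYp, hYq, hA_def, hB_def, hXr, hnC']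
        field_simp
        ring
      · rw [hderiv, show Y ^ (n - 1) = Y ^ (p - 1) * Y ^ q from by
          rw [← pow_add]; congr 1; omega, hYq, hA_def]
        field_simp
        ring
  refine ⟨?_, key⟩
  intro ℓ hℓ
  have hRpos : 0 < R := by
    rw [hR]
    have h1 : (0:ℝ) < p := by exact_mod_cast Nat.pos_of_ne_zero hp0
    have h2 : (0:ℝ) < q := by exact_mod_cast Nat.pos_of_ne_zero hq0
    have h3 : (0:ℝ) < n := by exact_mod_cast Nat.pos_of_ne_zero hn0
    positivity
  have hNR : (N : ℝ) ≠ 0 := Nat.cast_ne_zero.mpr (by omega)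
  have hNC : (N : ℂ) ≠ 0 := Nat.cast_ne_zero.mpr (by omega)
  have hreal : (R ^ ((1 : ℝ) / N)) ^ N = R := by
    rw [← Real.rpow_natCast (R ^ ((1:ℝ)/N)) N, ← Real.rpow_mul hRpos.le]
    rw [one_div_mul_cancel hNR, Real.rpow_one]
  have hω0 : ω ℓ ≠ 0 := by
    rw [hω]
    apply mul_ne_zero _ (Complex.exp_ne_zero _)
    simp only [ne_eq, Complex.ofReal_eq_zero]
    positivity
  have hXN : (ω ℓ) ^ N = (R : ℂ) := by
    rw [hω, mul_pow, ← Complex.ofReal_pow, hreal]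
    rw [← Complex.exp_nat_mul]
    rw [show (N : ℂ) * (2 * π * I * (ℓ / N)) = ℓ * (2 * π * I) by
      field_simp]
    rw [Complex.exp_nat_mul, Complex.exp_two_pi_mul_I, one_pow, mul_one]
  exact (key (ω ℓ) hω0).mpr hXN
end
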